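/- Let V be a ℤ≥0-graded vertex algebra over k ∋ 1/2, A = V₀, Ω ⊂ V₁ the span of elements a∂b, and T = V₁/Ω. Then the operation x_{(0)}y on V₁ descends to T (i.e. V₁_{(0)}Ω ⊂ Ω and Ω_{(0)}V₁ ⊂ Ω), and the induced bracket [τ, τ'] on T is skew-symmetric and satisfies the Jacobi identity, making T a Lie k-algebra. -/
import Mathlib


/-- `(-1)^n` for an integer exponent `n`. -/
def negOnePow (n : ℤ) : ℤ := if Even n then 1 else -1

/-- A `ℤ≥0`-graded vertex algebra over a commutative ring `k` (section 0.5 of the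
paper): a graded `k`-module `V` with a vacuum vector `𝟙 ∈ V₀`, bilinear operations
`a_{(n)}b` of degree `-n-1` for all `n ∈ ℤ`, satisfying the vacuum axioms (0.5.2)
and the Borcherds identity (0.5.3).  Here `C(m,j)` for `m ∈ ℤ`, `j ∈ ℕ` is the
generalized binomial coefficient, formalized via `Ring.choose` on `ℤ`; infinite
sums are expressed by `finsum` (`∑ᶠ`), and are locally finite by the grading. -/
structure GradedVertexAlgebra (k : Type*) (V : Type*) [CommRing k]
    [AddCommGroup V] [Module k V] where
  /-- the grading `V = ⊕_{i ≥ 0} V_i` -/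
  grading : ℕ → Submodule k V
  isInternal : DirectSum.IsInternal grading
  /-- the vacuum vector `𝟙` -/
  vac : V
  vac_mem : vac ∈ grading 0
  /-- the operations `a_{(n)} b`, `n ∈ ℤ` -/
  nop : ℤ → V →ₗ[k] V →ₗ[k] V
  /-- `_{(n)}` has degree `-n-1`; in particular it vanishes when the target degree
  `i + j - n - 1` is negative. -/
  nop_deg : ∀ (i j : ℕ) (n : ℤ) (x y : V), x ∈ grading i → y ∈ grading j →
    (∀ d : ℕ, (d : ℤ) = (i : ℤ) + j - n - 1 → nop n x y ∈ grading d) ∧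
    ((i : ℤ) + j - n - 1 < 0 → nop n x y = 0)
  /-- (0.5.2): `𝟙_{(n)}a = δ_{n,-1} a` -/
  vac_nop : ∀ (n : ℤ) (a : V), nop n vac a = if n = -1 then a else 0
  /-- (0.5.2): `a_{(-1)}𝟙 = a` -/
  nop_vac_neg_one : ∀ a : V, nop (-1) a vac = a
  /-- (0.5.2): `a_{(n)}𝟙 = 0` for `n ≥ 0` -/
  nop_vac : ∀ n : ℤ, 0 ≤ n → ∀ a : V, nop n a vac = 0
  /-- (0.5.3): the Borcherds identity. -/
  borcherds : ∀ (m n l : ℤ) (a b c : V),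
    (∑ᶠ j : ℕ, Ring.choose m j • nop (m + l - j) (nop (n + j) a b) c)
      = ∑ᶠ j : ℕ, ((-1 : ℤ) ^ j * Ring.choose n j) •
          (nop (m + n - j) a (nop (l + j) b c)
            - negOnePow n • nop (n + l - j) b (nop (m + j) a c))

/-- `∂^{(j)} a := a_{(-1-j)} 𝟙`, as in (0.5.5). -/
def GradedVertexAlgebra.vd {k V : Type*} [CommRing k] [AddCommGroup V] [Module k V]
    (𝕍 : GradedVertexAlgebra k V) (j : ℕ) (a : V) : V :=
  𝕍.nop (-1 - (j : ℤ)) a 𝕍.vac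

/-- The `k`-submodule `Ω ⊂ V₁` spanned by the elements `a_{(-1)} ∂b`,
`a, b ∈ A = V₀`, where `∂b := b_{(-2)} 𝟙`. -/
def GradedVertexAlgebra.Omega {k V : Type*} [CommRing k] [AddCommGroup V] [Module k V]
    (𝕍 : GradedVertexAlgebra k V) : Submodule k V :=
  Submodule.span k {v | ∃ a b : V, a ∈ 𝕍.grading 0 ∧ b ∈ 𝕍.grading 0 ∧
    v = 𝕍.nop (-1) a (𝕍.nop (-2) b 𝕍.vac)}

namespace QLAaux
variable {k V : Type*} [CommRing k] [AddCommGroup V] [Module k V]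
  (𝕍 : GradedVertexAlgebra k V)

/-- Derivation property of `x_{(0)}`, from Borcherds with `m = n = 0`. -/
lemma deriv (l : ℤ) (x y z : V) :
    𝕍.nop l (𝕍.nop 0 x y) z
      = 𝕍.nop 0 x (𝕍.nop l y z) - 𝕍.nop l y (𝕍.nop 0 x z) := by
  have h := 𝕍.borcherds 0 0 l x y z
  rw [finsum_eq_single _ 0 (fun j hj => by
        rw [Ring.choose_zero_pos ℤ (Nat.pos_of_ne_zero hj), zero_smul]),
      finsum_eq_single _ 0 (fun j hj => by
        rw [Ring.choose_zero_pos ℤ (Nat.pos_of_ne_zero hj), mul_zero, zero_smul])] at h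
  simpa [negOnePow, Ring.choose_zero_right] using h

/-- Skew symmetry on `V₁`: `x_{(0)}y + y_{(0)}x = ∂(x_{(1)}y)`,
from Borcherds with `m = -1`, `n = l = 0`, `c = 𝟙`. -/
lemma skew (x y : V) (hx : x ∈ 𝕍.grading 1) (hy : y ∈ 𝕍.grading 1) :
    𝕍.nop 0 x y + 𝕍.nop 0 y x = 𝕍.nop (-2) (𝕍.nop 1 x y) 𝕍.vac := by
  have h := 𝕍.borcherds (-1) 0 0 x y 𝕍.vac
  rw [finsum_eq_finset_sum_of_support_subset _ (s := {0, 1}) ?hs,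
      finsum_eq_single _ 0 (fun j hj => by
        rw [Ring.choose_zero_pos ℤ (Nat.pos_of_ne_zero hj), mul_zero, zero_smul])] at h
  case hs =>
    intro j hj
    by_contra hmem
    simp only [Finset.coe_insert, Finset.coe_singleton, Set.mem_insert_iff,
      Set.mem_singleton_iff, not_or] at hmem
    apply hj
    have hz : 𝕍.nop (j : ℤ) x y = 0 :=
      (𝕍.nop_deg 1 1 j x y hx hy).2 (by push_cast; omega)
    simp [hz]
  rw [Finset.sum_insert (by decide : (0:ℕ) ∉ ({1} : Finset ℕ)),
    Finset.sum_singleton] at h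
  norm_num [Ring.choose_zero_right, Ring.choose_one_right] at h
  simp only [𝕍.nop_vac_neg_one, 𝕍.nop_vac 0 le_rfl, negOnePow, pow_zero, one_mul,
    one_smul, mul_one, neg_smul, map_zero, LinearMap.zero_apply, sub_zero, Even.zero,
    if_true] at h
  rw [← sub_eq_zero] at h ⊢
  rw [← h]
  abel

lemma omega_le : 𝕍.Omega ≤ 𝕍.grading 1 := by
  apply Submodule.span_le.mpr
  rintro v ⟨a, b, ha, hb, rfl⟩
  have h1 : 𝕍.nop (-2) b 𝕍.vac ∈ 𝕍.grading 1 :=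
    (𝕍.nop_deg 0 0 (-2) b 𝕍.vac hb 𝕍.vac_mem).1 1 (by norm_num)
  exact (𝕍.nop_deg 0 1 (-1) a _ ha h1).1 1 (by norm_num)

lemma vd_mem_Omega {c : V} (hc : c ∈ 𝕍.grading 0) :
    𝕍.nop (-2) c 𝕍.vac ∈ 𝕍.Omega := by
  have h : 𝕍.nop (-2) c 𝕍.vac = 𝕍.nop (-1) 𝕍.vac (𝕍.nop (-2) c 𝕍.vac) := by
    simp [𝕍.vac_nop]
  rw [h]
  exact Submodule.subset_span ⟨𝕍.vac, c, 𝕍.vac_mem, hc, rfl⟩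

end QLAaux

/-- Section 2.1: over a ring containing `1/2`, the operation `x_{(0)}y` on `V₁`
descends to the quotient `T = V₁/Ω` (i.e. `V₁_{(0)}Ω ⊂ Ω` and `Ω_{(0)}V₁ ⊂ Ω`),
and the induced bracket on `T` is skew-symmetric and satisfies the Jacobi identity
(expressed here modulo `Ω`), making `T` a Lie `k`-algebra. -/
theorem quotient_lie_algebra {k V : Type*} [CommRing k] [AddCommGroup V] [Module k V]
    [Invertible (2 : k)] (𝕍 : GradedVertexAlgebra k V) :
    (∀ x : V, x ∈ 𝕍.grading 1 → ∀ ω ∈ 𝕍.Omega, 𝕍.nop 0 x ω ∈ 𝕍.Omega) ∧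
    (∀ ω ∈ 𝕍.Omega, ∀ x : V, x ∈ 𝕍.grading 1 → 𝕍.nop 0 ω x ∈ 𝕍.Omega) ∧
    (∀ x y : V, x ∈ 𝕍.grading 1 → y ∈ 𝕍.grading 1 →
      𝕍.nop 0 x y + 𝕍.nop 0 y x ∈ 𝕍.Omega) ∧
    (∀ x y z : V, x ∈ 𝕍.grading 1 → y ∈ 𝕍.grading 1 → z ∈ 𝕍.grading 1 →
      𝕍.nop 0 x (𝕍.nop 0 y z) - 𝕍.nop 0 (𝕍.nop 0 x y) z - 𝕍.nop 0 y (𝕍.nop 0 x z)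
        ∈ 𝕍.Omega) := by
  have deriv : ∀ (l : ℤ) (x y z : V), 𝕍.nop l (𝕍.nop 0 x y) z
      = 𝕍.nop 0 x (𝕍.nop l y z) - 𝕍.nop l y (𝕍.nop 0 x z) := QLAaux.deriv 𝕍
  have skew := QLAaux.skew 𝕍
  have omega_le := QLAaux.omega_le 𝕍
  have vd_mem_Omega : ∀ {c : V}, c ∈ 𝕍.grading 0 → 𝕍.nop (-2) c 𝕍.vac ∈ 𝕍.Omega :=
    fun {c} => QLAaux.vd_mem_Omega 𝕍 (c := c)
  have part1 : ∀ x : V, x ∈ 𝕍.grading 1 → ∀ ω ∈ 𝕍.Omega, 𝕍.nop 0 x ω ∈ 𝕍.Omega := by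
    intro x hx ω hω
    induction hω using Submodule.span_induction with
    | mem v hv =>
      obtain ⟨a, b, ha, hb, rfl⟩ := hv
      have hxa : 𝕍.nop 0 x a ∈ 𝕍.grading 0 :=
        (𝕍.nop_deg 1 0 0 x a hx ha).1 0 (by norm_num)
      have hxb : 𝕍.nop 0 x b ∈ 𝕍.grading 0 :=
        (𝕍.nop_deg 1 0 0 x b hx hb).1 0 (by norm_num)
      have hd := deriv (-2) x b 𝕍.vac
      rw [𝕍.nop_vac 0 le_rfl, map_zero, sub_zero] at hd
      have key := deriv (-1) x a (𝕍.nop (-2) b 𝕍.vac)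
      have heq : 𝕍.nop 0 x (𝕍.nop (-1) a (𝕍.nop (-2) b 𝕍.vac)) =
          𝕍.nop (-1) (𝕍.nop 0 x a) (𝕍.nop (-2) b 𝕍.vac)
            + 𝕍.nop (-1) a (𝕍.nop (-2) (𝕍.nop 0 x b) 𝕍.vac) := by
        rw [hd]
        exact (eq_sub_iff_add_eq.mp key).symm
      rw [heq]
      exact add_mem (Submodule.subset_span ⟨_, _, hxa, hb, rfl⟩)
        (Submodule.subset_span ⟨_, _, ha, hxb, rfl⟩)
    | zero => simp
    | add u v _ _ hu hv => rw [map_add]; exact add_mem hu hv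
    | smul c u _ hu => rw [map_smul]; exact Submodule.smul_mem _ _ hu
  refine ⟨part1, ?_, ?_, ?_⟩
  · intro ω hω x hx
    have hω1 : ω ∈ 𝕍.grading 1 := omega_le hω
    have hs := skew ω x hω1 hx
    have heq : 𝕍.nop 0 ω x = 𝕍.nop (-2) (𝕍.nop 1 ω x) 𝕍.vac - 𝕍.nop 0 x ω := by
      rw [← hs]; abel
    rw [heq]
    exact sub_mem (vd_mem_Omega ((𝕍.nop_deg 1 1 1 ω x hω1 hx).1 0 (by norm_num)))
      (part1 x hx ω hω)
  · intro x y hx hy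
    rw [skew x y hx hy]
    exact vd_mem_Omega ((𝕍.nop_deg 1 1 1 x y hx hy).1 0 (by norm_num))
  · intro x y z hx hy hz
    have e : 𝕍.nop 0 x (𝕍.nop 0 y z) - 𝕍.nop 0 (𝕍.nop 0 x y) z
        - 𝕍.nop 0 y (𝕍.nop 0 x z) = 0 := by
      rw [deriv 0 x y z]; abel
    rw [e]
    exact Submodule.zero_mem _
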